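/- In the category of types, let X, X', C, Y' be types, f : X' → X, i' : X' → Y' and f₁ : Y' → X ⊕ C functions such that the square with top f, left Sum.inl : X → X ⊕ C, right i' and bottom f₁ is a pullback (so that, for every y' ∈ Y' outside the range of i', f₁(y') lies in the range of Sum.inr, yielding an induced function γ from the complement of the range of i' in Y' to C with f₁(y') = Sum.inr(γ(y'))). Then this pullback square is a final pullback complement of Sum.inl : X → X ⊕ C along f if and only if the induced function γ is a bijection. -/

import Mathlib

open CategoryTheory CategoryTheory.Limits

universe u

/-- A final pullback complement (FPBC) of `mL : L ⟶ G` along `l : K ⟶ L`: a pullback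
square `mK : K ⟶ D`, `l₁ : D ⟶ G` such that every pullback of `mL` along some
`l' : K' ⟶ L` factors uniquely through it, compatibly with any `f : K' ⟶ K` over `L`. -/
structure IsFPBC {𝒞 : Type*} [Category 𝒞] {K L D G : 𝒞}
    (l : K ⟶ L) (mL : L ⟶ G) (mK : K ⟶ D) (l₁ : D ⟶ G) : Prop where
  isPullback : IsPullback l mK mL l₁
  final : ∀ {K' D' : 𝒞} (l' : K' ⟶ L) (m' : K' ⟶ D') (l'₁ : D' ⟶ G),
    IsPullback l' m' mL l'₁ → ∀ f : K' ⟶ K, f ≫ l = l' →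
      ∃! f₁ : D' ⟶ D, f₁ ≫ l₁ = l'₁ ∧ m' ≫ f₁ = f ≫ mK

/-!
Both conditions say that every fibre `f₁⁻¹(inr c)` is a singleton. If the square is an FPBC,
the canonical pullback square over `X' ⊕ C` factors through it, which makes these fibres
nonempty, and a transposition of two points of one fibre is an endomorphism of the square,
which finality forces to be the identity. Conversely, if the fibres are singletons, a
competing pullback square over `Sum.inl` is mapped into `Y'` pointwise: points over `inl`
come from its top-left corner and go where `i'` sends them, and the point over `inr c` goes
to the unique point of `f₁⁻¹(inr c)`.
-/

theorem IsFPBC.eq_id_of_comp_eq {𝒞 : Type*} [Category 𝒞] {K L D G : 𝒞}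
    {l : K ⟶ L} {mL : L ⟶ G} {mK : K ⟶ D} {l₁ : D ⟶ G} (h : IsFPBC l mL mK l₁)
    (u : D ⟶ D) (hu₁ : u ≫ l₁ = l₁) (hu₂ : mK ≫ u = mK) : u = 𝟙 D :=
  (h.final l mK l₁ h.isPullback (𝟙 K) (Category.id_comp l)).unique
    ⟨hu₁, by rw [hu₂, Category.id_comp]⟩ ⟨Category.id_comp l₁, by simp⟩

theorem isPullback_inl_sumMap {X X' : Type u} (f : X' → X) (C : Type u) :
    IsPullback (↾f) (↾(Sum.inl : X' → X' ⊕ C)) (↾(Sum.inl : X → X ⊕ C))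
      (↾(Sum.map f id)) := by
  rw [Types.isPullback_iff]
  refine ⟨rfl, fun _ _ h => Sum.inl_injective h.2, ?_⟩
  rintro x (x' | c) h
  · exact ⟨x', Sum.inl_injective h.symm, rfl⟩
  · simp at h

theorem IsFPBC.injOn_compl_range {K L D G : Type u} {l : K ⟶ L} {mL : L ⟶ G} {mK : K ⟶ D}
    {l₁ : D ⟶ G} (h : IsFPBC l mL mK l₁) : Set.InjOn l₁ (Set.range mK)ᶜ := by
  classical
  intro y₁ hy₁ y₂ hy₂ heq
  have hswap : ↾(Equiv.swap y₁ y₂) = 𝟙 D := by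
    refine h.eq_id_of_comp_eq _ ?_ ?_
    · ext z
      change l₁ (Equiv.swap y₁ y₂ z) = l₁ z
      grind
    · ext k
      exact Equiv.swap_apply_of_ne_of_ne (fun e => hy₁ ⟨k, e⟩) (fun e => hy₂ ⟨k, e⟩)
  simpa using (types_congr_hom hswap y₁).symm

section

variable {X X' C Y' : Type u} {f : X' → X} {i' : X' → Y'} {f₁ : Y' → X ⊕ C}

theorem not_mem_range_of_eq_inr (hleft : ∀ x', (f₁ (i' x')).isLeft) {y' : Y'} {c : C}
    (h : f₁ y' = Sum.inr c) : y' ∉ Set.range i' := by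
  rintro ⟨x', rfl⟩
  simpa [h] using hleft x'

theorem bijective_iff_forall_existsUnique_eq_inr (hleft : ∀ x', (f₁ (i' x')).isLeft)
    {γ : {y' : Y' // y' ∉ Set.range i'} → C}
    (hγ : ∀ y' : {y' : Y' // y' ∉ Set.range i'}, f₁ y'.1 = Sum.inr (γ y')) :
    Function.Bijective γ ↔ ∀ c, ∃! y', f₁ y' = Sum.inr c := by
  have hγ_eq : ∀ y' c, γ y' = c ↔ f₁ y'.1 = Sum.inr c := fun y' c => by simp [hγ]
  rw [Function.bijective_iff_existsUnique]
  refine forall_congr' fun c => ⟨?_, ?_⟩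
  · rintro ⟨y', hy', huniq⟩
    refine ⟨y'.1, (hγ_eq y' c).1 hy', fun z hz => ?_⟩
    exact congrArg Subtype.val
      (huniq ⟨z, not_mem_range_of_eq_inr hleft hz⟩ ((hγ_eq _ c).2 hz))
  · rintro ⟨y', hy', huniq⟩
    exact ⟨⟨y', not_mem_range_of_eq_inr hleft hy'⟩, (hγ_eq _ c).2 hy',
      fun z hz => Subtype.ext (huniq z.1 ((hγ_eq z c).1 hz))⟩

theorem IsFPBC.exists_eq_inr
    (h : IsFPBC (𝒞 := Type u) (↾f) (↾(Sum.inl : X → X ⊕ C)) (↾i') (↾f₁)) (c : C) :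
    ∃ y', f₁ y' = Sum.inr c := by
  obtain ⟨φ, ⟨hφ, -⟩, -⟩ := h.final _ _ _ (isPullback_inl_sumMap f C) (𝟙 X') rfl
  exact ⟨φ (Sum.inr c), types_congr_hom hφ (Sum.inr c)⟩

theorem IsFPBC.existsUnique_eq_inr
    (h : IsFPBC (𝒞 := Type u) (↾f) (↾(Sum.inl : X → X ⊕ C)) (↾i') (↾f₁)) (c : C) :
    ∃! y', f₁ y' = Sum.inr c := by
  have hcomm : ∀ x', f₁ (i' x') = Sum.inl (f x') :=
    fun x' => (types_congr_hom h.isPullback.w x').symm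
  have hleft : ∀ x', (f₁ (i' x')).isLeft := by simp [hcomm]
  obtain ⟨y, hy⟩ := h.exists_eq_inr c
  refine ⟨y, hy, fun y' hy' => h.injOn_compl_range ?_ ?_ (hy'.trans hy.symm)⟩
  · exact not_mem_range_of_eq_inr hleft hy'
  · exact not_mem_range_of_eq_inr hleft hy

theorem existsUnique_lift_apply (hcomm : ∀ x', f₁ (i' x') = Sum.inl (f x'))
    (hinr : ∀ c, ∃! y', f₁ y' = Sum.inr c) {K' D' : Type u} {l' : K' ⟶ X} {m' : K' ⟶ D'}
    {l'₁ : D' ⟶ X ⊕ C} (hpb' : IsPullback l' m' (↾Sum.inl) l'₁) {g : K' → X'}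
    (hg : ∀ k, f (g k) = l' k) (d : D') :
    ∃! y', f₁ y' = l'₁ d ∧ ∀ k, m' k = d → y' = i' (g k) := by
  have hcomm' : ∀ k, l'₁ (m' k) = Sum.inl (l' k) := fun k => (types_congr_hom hpb'.w k).symm
  cases hd : l'₁ d with
  | inl x =>
    obtain ⟨k, -, rfl⟩ := Types.exists_of_isPullback hpb' x d hd.symm
    refine ⟨i' (g k), ⟨by rw [hcomm, hg, ← hcomm', hd], fun k₂ hk₂ => ?_⟩,
      fun y' hy' => hy'.2 k rfl⟩
    have hl' : l' k₂ = l' k := Sum.inl_injective (by rw [← hcomm', ← hcomm', hk₂])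
    rw [Types.ext_of_isPullback hpb' hl' hk₂]
  | inr c =>
    obtain ⟨y', hy', huniq⟩ := hinr c
    refine ⟨y', ⟨hy', fun k hk => ?_⟩, fun z hz => huniq z hz.1⟩
    simp [← hk, hcomm'] at hd

theorem isFPBC_of_forall_existsUnique_eq_inr
    (hpb : IsPullback (C := Type u) (↾f) (↾i') (↾Sum.inl) (↾f₁))
    (hinr : ∀ c, ∃! y', f₁ y' = Sum.inr c) :
    IsFPBC (𝒞 := Type u) (↾f) (↾(Sum.inl : X → X ⊕ C)) (↾i') (↾f₁) := by
  refine ⟨hpb, fun l' m' l'₁ hpb' g hg => ?_⟩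
  have hcomm : ∀ x', f₁ (i' x') = Sum.inl (f x') := fun x' => (types_congr_hom hpb.w x').symm
  have hlift := existsUnique_lift_apply hcomm hinr hpb' (fun k => types_congr_hom hg k)
  choose F hF using fun d => (hlift d).exists
  refine ⟨↾F, ⟨?_, ?_⟩, fun F' ⟨hF'₁, hF'₂⟩ => ?_⟩
  · ext d; exact (hF d).1
  · ext k; exact (hF (m' k)).2 k rfl
  · ext d
    refine (hlift d).unique ⟨types_congr_hom hF'₁ d, ?_⟩ (hF d)
    rintro k rfl
    exact types_congr_hom hF'₂ k

end

/-- Given a pullback of `Sum.inl : X → X ⊕ C` along `f` in types, with the induced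
map `γ` from the complement of the range of `i'` to `C`, the square is a final
pullback complement iff `γ` is a bijection. -/
theorem isFPBC_iff_bijective_gamma {X X' C Y' : Type u}
    (f : X' → X) (i' : X' → Y') (f₁ : Y' → X ⊕ C)
    (hpb : IsPullback (C := Type u) (TypeCat.ofHom f) (TypeCat.ofHom i')
      (TypeCat.ofHom Sum.inl) (TypeCat.ofHom f₁))
    (γ : {y' : Y' // y' ∉ Set.range i'} → C)
    (hγ : ∀ y' : {y' : Y' // y' ∉ Set.range i'}, f₁ y'.1 = Sum.inr (γ y')) :
    IsFPBC (𝒞 := Type u) (TypeCat.ofHom f) (TypeCat.ofHom (Sum.inl : X → X ⊕ C))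
      (TypeCat.ofHom i') (TypeCat.ofHom f₁) ↔ Function.Bijective γ := by
  have hcomm : ∀ x', f₁ (i' x') = Sum.inl (f x') := fun x' => (types_congr_hom hpb.w x').symm
  have hleft : ∀ x', (f₁ (i' x')).isLeft := by simp [hcomm]
  rw [bijective_iff_forall_existsUnique_eq_inr hleft hγ]
  exact ⟨IsFPBC.existsUnique_eq_inr, isFPBC_of_forall_existsUnique_eq_inr hpb⟩
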